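/- Let a₁, a₂, …, a_k be positive integers with gcd(a₁,…,a_k) = 1. Then the Sylvester sum satisfies s(a₁,…,a_k) = (1/(2a₁)) ∑_{i=1}^{a₁−1} m_i² − (1/2) ∑_{i=1}^{a₁−1} m_i + (a₁² − 1)/12. -/

import Mathlib

/-!
Fix the first generator `A = a₁` and let `R` be the set of representable integers. Since `R` is
closed under adding `A`, the residue class of `i ∈ [1, A)` meets `R` exactly in
`m_i, m_i + A, m_i + 2A, …`, so the gaps in that class are `i, i + A, …, m_i - A`. Summing
these arithmetic progressions gives `(m_i² - i²) / (2A) - (m_i - i) / 2` per class, and the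
terms in `i` add up to `-(A² - 1) / 12`.
-/

open Finset

lemma sum_range_cast_id (n : ℕ) : ∑ i ∈ range n, (i : ℚ) = n * (n - 1) / 2 := by
  induction n with
  | zero => simp
  | succ n ih => rw [sum_range_succ, ih]; push_cast; ring

lemma sum_range_cast_sq (n : ℕ) :
    ∑ i ∈ range n, (i : ℚ) ^ 2 = n * (n - 1) * (2 * n - 1) / 6 := by
  induction n with
  | zero => simp
  | succ n ih => rw [sum_range_succ, ih]; push_cast; ring

lemma sum_Ico_one_sq_div_sub_div {A : ℕ} (hA : 0 < A) :
    ∑ i ∈ Ico 1 A, ((i : ℚ) ^ 2 / (2 * A) - i / 2) = -((A : ℚ) ^ 2 - 1) / 12 := by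
  have hA' : (A : ℚ) ≠ 0 := by positivity
  have h := sum_range_eq_add_Ico (fun i : ℕ => (i : ℚ) ^ 2 / (2 * A) - i / 2) hA
  rw [sum_sub_distrib, ← sum_div, ← sum_div, sum_range_cast_sq, sum_range_cast_id] at h
  rw [Nat.cast_zero, zero_pow two_ne_zero, zero_div, zero_div, sub_zero, zero_add] at h
  rw [← h]
  field_simp
  ring

lemma sum_range_add_mul_eq {A : ℕ} (hA : 0 < A) (i q : ℕ) :
    ∑ j ∈ range q, ((i + A * j : ℕ) : ℚ) =
      (((i + A * q : ℕ) : ℚ) ^ 2 / (2 * A) - (i + A * q : ℕ) / 2)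
        - ((i : ℚ) ^ 2 / (2 * A) - i / 2) := by
  have hA' : (A : ℚ) ≠ 0 := by positivity
  push_cast
  rw [sum_add_distrib, sum_const, card_range, nsmul_eq_mul, ← mul_sum, sum_range_cast_id]
  field_simp
  ring

section GapsOfAddClosedSet

variable {A : ℕ} {R : Set ℕ} {m : ℕ → ℕ}

lemma add_mul_mem_of_add_mem (hadd : ∀ n ∈ R, n + A ∈ R) {n : ℕ} (hn : n ∈ R) (t : ℕ) :
    n + A * t ∈ R := by
  induction t with
  | zero => simpa using hn
  | succ t ih => simpa [mul_add, ← add_assoc] using hadd _ ih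

lemma add_mul_div_eq_of_isLeast {i : ℕ} (hm : IsLeast {n ∈ R | n % A = i} (m i)) :
    i + A * (m i / A) = m i := by
  conv_rhs => rw [← Nat.div_add_mod (m i) A, hm.1.2]
  exact add_comm _ _

lemma add_mul_mem_iff (hadd : ∀ n ∈ R, n + A ∈ R) {i : ℕ} (hi : i < A)
    (hm : IsLeast {n ∈ R | n % A = i} (m i)) (j : ℕ) :
    i + A * j ∈ R ↔ m i / A ≤ j := by
  have hmi := add_mul_div_eq_of_isLeast hm
  constructor
  · intro hj
    have hle : m i ≤ i + A * j :=
      hm.2 ⟨hj, by rw [Nat.add_mul_mod_self_left, Nat.mod_eq_of_lt hi]⟩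
    rw [← hmi] at hle
    exact Nat.le_of_mul_le_mul_left (Nat.le_of_add_le_add_left hle) (by omega)
  · intro hj
    obtain ⟨t, rfl⟩ := Nat.exists_eq_add_of_le hj
    rw [mul_add, ← add_assoc, hmi]
    exact add_mul_mem_of_add_mem hadd hm.1.1 t

lemma add_mul_injOn (hA : 0 < A) :
    Set.InjOn (fun p : (_ : ℕ) × ℕ => p.1 + A * p.2) {p | p.1 < A} := by
  rintro ⟨i, j⟩ (hi : i < A) ⟨i', j'⟩ (hi' : i' < A) h
  have hmod := congrArg (· % A) h
  have hdiv := congrArg (· / A) h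
  simp only [Nat.add_mul_mod_self_left, Nat.mod_eq_of_lt hi, Nat.mod_eq_of_lt hi',
    Nat.add_mul_div_left _ _ hA, Nat.div_eq_of_lt hi, Nat.div_eq_of_lt hi', zero_add] at hmod hdiv
  rw [hmod, hdiv]

variable (A m) in
def gapIndices : Finset ((_ : ℕ) × ℕ) := (Ico 1 A).sigma fun i => range (m i / A)

lemma gaps_eq_image_gapIndices (hA : 0 < A) (h0 : 0 ∈ R) (hadd : ∀ n ∈ R, n + A ∈ R)
    (hm : ∀ i ∈ Ico 1 A, IsLeast {n ∈ R | n % A = i} (m i)) :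
    {n | 0 < n ∧ n ∉ R} = (gapIndices A m).image (fun p => p.1 + A * p.2) := by
  ext n
  simp only [gapIndices, Set.mem_ofPred_eq, coe_image, Set.mem_image, mem_coe, mem_sigma, mem_Ico,
    mem_range, Sigma.exists]
  constructor
  · rintro ⟨hn, hnR⟩
    have hn_eq : n % A + A * (n / A) = n := Nat.mod_add_div n A
    have hi : n % A ≠ 0 := fun hi => hnR <| by
      rw [← hn_eq, hi]
      exact add_mul_mem_of_add_mem hadd h0 (n / A)
    have hi_mem : n % A ∈ Ico 1 A := mem_Ico.2 ⟨Nat.pos_of_ne_zero hi, Nat.mod_lt n hA⟩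
    refine ⟨n % A, n / A, ⟨mem_Ico.1 hi_mem, ?_⟩, hn_eq⟩
    rw [← not_le, ← add_mul_mem_iff hadd (Nat.mod_lt n hA) (hm _ hi_mem), hn_eq]
    exact hnR
  · rintro ⟨i, j, ⟨⟨hi1, hiA⟩, hj⟩, rfl⟩
    refine ⟨by omega, ?_⟩
    rw [add_mul_mem_iff hadd hiA (hm i (mem_Ico.2 ⟨hi1, hiA⟩))]
    exact not_le.2 hj

theorem finsum_gaps_eq (hA : 0 < A) (h0 : 0 ∈ R) (hadd : ∀ n ∈ R, n + A ∈ R)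
    (hm : ∀ i ∈ Ico 1 A, IsLeast {n ∈ R | n % A = i} (m i)) :
    ∑ᶠ n ∈ {n | 0 < n ∧ n ∉ R}, (n : ℚ) =
      1 / (2 * A) * ∑ i ∈ Ico 1 A, (m i : ℚ) ^ 2 - 1 / 2 * ∑ i ∈ Ico 1 A, (m i : ℚ)
        + ((A : ℚ) ^ 2 - 1) / 12 := by
  have hinj : Set.InjOn (fun p : (_ : ℕ) × ℕ => p.1 + A * p.2) (gapIndices A m) :=
    (add_mul_injOn hA).mono fun p hp => (mem_Ico.1 (mem_sigma.1 hp).1).2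
  have hclass : ∀ i ∈ Ico 1 A, ∑ j ∈ range (m i / A), ((i + A * j : ℕ) : ℚ) =
      ((m i : ℚ) ^ 2 / (2 * A) - m i / 2) - ((i : ℚ) ^ 2 / (2 * A) - i / 2) := fun i hi => by
    rw [sum_range_add_mul_eq hA, add_mul_div_eq_of_isLeast (hm i hi)]
  rw [gaps_eq_image_gapIndices hA h0 hadd hm, finsum_mem_coe_finset, sum_image hinj, gapIndices,
    sum_sigma, sum_congr rfl hclass, sum_sub_distrib, sum_Ico_one_sq_div_sub_div hA,
    sum_sub_distrib, ← sum_div, ← sum_div]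
  ring

end GapsOfAddClosedSet

lemma exists_sum_mul_eq_add {ι : Type*} [Fintype ι] (a : ι → ℕ) (i : ι) {n : ℕ}
    (hn : ∃ x : ι → ℕ, n = ∑ j, x j * a j) : ∃ x : ι → ℕ, n + a i = ∑ j, x j * a j := by
  classical
  obtain ⟨x, rfl⟩ := hn
  refine ⟨x + Pi.single i 1, ?_⟩
  simp [add_mul, sum_add_distrib, Pi.single_apply]

theorem sylvester_sum_eq_general
    (k : ℕ) (hk : 0 < k) (a : Fin k → ℕ) (ha : ∀ i, 0 < a i)
    (m : ℕ → ℕ)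
    (hm : ∀ i, 1 ≤ i → i < a ⟨0, hk⟩ →
      0 < m i ∧ (∃ x : Fin k → ℕ, m i = ∑ j, x j * a j) ∧ m i % a ⟨0, hk⟩ = i ∧
        ∀ n : ℕ, 0 < n → (∃ x : Fin k → ℕ, n = ∑ j, x j * a j) → n % a ⟨0, hk⟩ = i →
          m i ≤ n) :
    ∑ᶠ n ∈ {n : ℕ | 0 < n ∧ ¬∃ x : Fin k → ℕ, n = ∑ j, x j * a j}, (n : ℚ) =
      (1 / (2 * (a ⟨0, hk⟩ : ℚ))) * ∑ i ∈ Finset.Ico 1 (a ⟨0, hk⟩), (m i : ℚ) ^ 2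
        - (1 / 2) * ∑ i ∈ Finset.Ico 1 (a ⟨0, hk⟩), (m i : ℚ)
        + ((a ⟨0, hk⟩ : ℚ) ^ 2 - 1) / 12 := by
  set R : Set ℕ := {n | ∃ x : Fin k → ℕ, n = ∑ j, x j * a j}
  have hleast : ∀ i ∈ Ico 1 (a ⟨0, hk⟩), IsLeast {n ∈ R | n % a ⟨0, hk⟩ = i} (m i) := by
    intro i hi
    obtain ⟨hi1, hiA⟩ := mem_Ico.1 hi
    obtain ⟨-, hrep, hmod, hmin⟩ := hm i hi1 hiA
    refine ⟨⟨hrep, hmod⟩, fun n ⟨hn, hnmod⟩ => hmin n ?_ hn hnmod⟩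
    exact Nat.pos_of_ne_zero fun h => by simp [h] at hnmod; omega
  exact finsum_gaps_eq (ha _) ⟨0, by simp⟩ (fun n hn => exists_sum_mul_eq_add a _ hn) hleast

/-- the Sylvester sum equals
`(1/(2a₁)) ∑ m_i² - (1/2) ∑ m_i + (a₁² - 1)/12`. -/
theorem sylvester_sum_eq
    (k : ℕ) (hk : 0 < k) (a : Fin k → ℕ) (ha : ∀ i, 0 < a i)
    (hgcd : Finset.univ.gcd a = 1)
    (m : ℕ → ℕ)
    (hm : ∀ i, 1 ≤ i → i < a ⟨0, hk⟩ →
      0 < m i ∧ (∃ x : Fin k → ℕ, m i = ∑ j, x j * a j) ∧ m i % a ⟨0, hk⟩ = i ∧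
        ∀ n : ℕ, 0 < n → (∃ x : Fin k → ℕ, n = ∑ j, x j * a j) → n % a ⟨0, hk⟩ = i →
          m i ≤ n) :
    ∑ᶠ n ∈ {n : ℕ | 0 < n ∧ ¬∃ x : Fin k → ℕ, n = ∑ j, x j * a j}, (n : ℚ) =
      (1 / (2 * (a ⟨0, hk⟩ : ℚ))) * ∑ i ∈ Finset.Ico 1 (a ⟨0, hk⟩), (m i : ℚ) ^ 2
        - (1 / 2) * ∑ i ∈ Finset.Ico 1 (a ⟨0, hk⟩), (m i : ℚ)
        + ((a ⟨0, hk⟩ : ℚ) ^ 2 - 1) / 12 :=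
  sylvester_sum_eq_general k hk a ha m hm
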